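/- arXiv:1704.01199 — 4 statements merged into one kernel-verified Lean document; each statement's English description precedes it below -/
import Mathlib

section
/- Let n be an odd prime with 2 a quadratic residue modulo n, let m = ord_n(2), and let β be a primitive n-th root of unity in GF(2^m). Then for every l with 1 ≤ l ≤ n-1, the set {1, β^l, β^(2l), ..., β^((m-1)l)} is a basis of GF(2^m) over GF(2). -/
/-!
Since `n` is prime and `0 < l < n`, `γ = β ^ l` again has order `n`. If `d` is the degree of
the minimal polynomial of `γ` over `GF(2)`, then `γ` is a unit of the field `GF(2)(γ)` with `2 ^ d`
elements, so `n ∣ 2 ^ d - 1`, i.e. `m = ord_n(2)` divides `d`. Since also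
`d ≤ [GF(2 ^ m) : GF(2)] = m`, we get `d = m`, and the `m` linearly independent powers
`1, γ, …, γ ^ (m - 1)` form a basis.
-/

open Module IntermediateField

theorem orderOf_natCast_card_dvd_natDegree_minpoly {K L : Type*} [Field K] [Finite K] [Field L]
    [Algebra K L] {x : L} (hx : IsIntegral K x) (hx0 : x ≠ 0) :
    orderOf (Nat.card K : ZMod (orderOf x)) ∣ (minpoly K x).natDegree := by
  have : FiniteDimensional K K⟮x⟯ := adjoin.finiteDimensional hx
  have : Finite K⟮x⟯ := Module.finite_of_finite K
  have : Fintype K⟮x⟯ := Fintype.ofFinite _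
  have hcard : Fintype.card K⟮x⟯ = Nat.card K ^ (minpoly K x).natDegree := by
    rw [Fintype.card_eq_nat_card, natCard_eq_pow_finrank (K := K), adjoin.finrank hx]
  have hgen : AdjoinSimple.gen K x ≠ 0 := by simpa [← Subtype.coe_ne_coe] using hx0
  have hpow : x ^ (Nat.card K ^ (minpoly K x).natDegree - 1) = 1 := by
    simpa [hcard] using congrArg Subtype.val (FiniteField.pow_card_sub_one_eq_one _ hgen)
  have hdvd : orderOf x ∣ Nat.card K ^ (minpoly K x).natDegree - 1 :=
    orderOf_dvd_of_pow_eq_one hpow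
  apply orderOf_dvd_of_pow_eq_one
  rw [← Nat.cast_pow, ← Nat.sub_add_cancel (Nat.one_le_pow _ _ Nat.card_pos), Nat.cast_add,
    (ZMod.natCast_eq_zero_iff _ _).2 hdvd, Nat.cast_one, zero_add]

theorem exists_basis_pow_of_natDegree_minpoly_eq_finrank {K L : Type*} [Field K] [Field L]
    [Algebra K L] [FiniteDimensional K L] (x : L) {k : ℕ} (hk : finrank K L = k)
    (hx : (minpoly K x).natDegree = k) :
    ∃ b : Basis (Fin k) K L, ∀ i, b i = x ^ (i : ℕ) := by
  subst hx
  exact ⟨basisOfLinearIndependentOfCardEqFinrank' _ (linearIndependent_pow x) (by simp [hk]),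
    fun i => by simp⟩

theorem powers_of_beta_l_basis_general (n : ℕ) (hn : n.Prime)
    (m : ℕ) (hm : m = orderOf (2 : ZMod n))
    (β : GaloisField 2 m) (hβ : orderOf β = n)
    (l : ℕ) (hl1 : 1 ≤ l) (hln : l ≤ n - 1) :
    ∃ b : Module.Basis (Fin m) (ZMod 2) (GaloisField 2 m),
      ∀ i : Fin m, b i = β ^ (l * (i : ℕ)) := by
  have hcop : (orderOf β).Coprime l :=
    hβ ▸ Nat.coprime_of_lt_prime (by omega) (by have := hn.two_le; omega) hn
  have hγ : orderOf (β ^ l) = n := hβ ▸ hcop.orderOf_pow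
  have hγ0 : β ^ l ≠ 0 := by
    intro h
    exact hn.ne_zero (by rw [← hγ, h, orderOf_zero])
  have hint : IsIntegral (ZMod 2) (β ^ l) := .of_finite _ _
  have hmd : m ∣ (minpoly (ZMod 2) (β ^ l)).natDegree := by
    have h := orderOf_natCast_card_dvd_natDegree_minpoly hint hγ0
    rw [hγ, Nat.card_zmod, Nat.cast_ofNat, ← hm] at h
    exact h
  have hm0 : m ≠ 0 := by
    rintro rfl
    exact (minpoly.natDegree_pos hint).ne' (Nat.eq_zero_of_zero_dvd hmd)
  have hdeg : (minpoly (ZMod 2) (β ^ l)).natDegree = m :=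
    le_antisymm ((minpoly.natDegree_le _).trans_eq (GaloisField.finrank 2 hm0))
      (Nat.le_of_dvd (minpoly.natDegree_pos hint) hmd)
  obtain ⟨b, hb⟩ :=
    exists_basis_pow_of_natDegree_minpoly_eq_finrank _ (GaloisField.finrank 2 hm0) hdeg
  exact ⟨b, fun i => by rw [hb, pow_mul]⟩

/-- Let `n` be an odd prime with `2` a quadratic residue modulo `n`, let
`m = ord_n(2)`, and let `β` be a primitive `n`-th root of unity in `GF(2^m)`.
Then for every `l` with `1 ≤ l ≤ n-1`, the family `1, β^l, β^(2l), ..., β^((m-1)l)`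
is a basis of `GF(2^m)` over `GF(2)`. -/
theorem powers_of_beta_l_basis (n : ℕ) (hn : n.Prime) (hodd : Odd n)
    (h2 : IsSquare (2 : ZMod n))
    (m : ℕ) (hm : m = orderOf (2 : ZMod n))
    (β : GaloisField 2 m) (hβ : orderOf β = n)
    (l : ℕ) (hl1 : 1 ≤ l) (hln : l ≤ n - 1) :
    ∃ b : Module.Basis (Fin m) (ZMod 2) (GaloisField 2 m),
      ∀ i : Fin m, b i = β ^ (l * (i : ℕ)) :=
  powers_of_beta_l_basis_general n hn m hm β hβ l hl1 hln
end

section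
/- Let n be an odd prime and let C̃ be a binary linear code of length n+1, coordinates indexed by GF(n) ∪ {∞}, with C̃ ≠ GF(2)^{n+1}, invariant under PSL₂(n). Then the punctured code C of C̃ at the coordinate ∞ is a cyclic code of length n (under the identification of coordinate positions with Z/nZ), and dim(C) = dim(C̃), and C̃ equals the extended code of C (where the extended coordinate equals the sum of the other coordinates). -/
/-!
Averaging a codeword over the `n` translations `x ↦ x + b` gives, when the codeword violates the
parity `v ∞ = ∑ᵢ v i`, the word `e_∞ + c·𝟙` (here `n` odd is used). Moving it by the map
`x ↦ -1/(x - x₀)`, which sends only `x₀` to `∞`, and subtracting yields `e_{x₀} - e_∞`; together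
these span everything, contradicting `C̃ ≠ ⊤`. So every word of `C̃` satisfies the parity, which
makes puncturing at `∞` injective on `C̃` with the extension as inverse, while the translation
`x ↦ x + 1` in `PSL₂(n)` makes the punctured code cyclic.
-/

/-- The fractional linear transformation `τ_{(a,b,c,d)} : x ↦ (ax+c)/(bx+d)` on the
projective line `GF(n) ∪ {∞}` (with `∞` modelled as `none`). -/
def mobius (n : ℕ) (a b c d : ZMod n) : Option (ZMod n) → Option (ZMod n)
  | none => if b = 0 then none else some (a * b⁻¹)
  | some x => if b * x + d = 0 then none else some ((a * x + c) * (b * x + d)⁻¹)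

def IsPSL2Invariant (n : ℕ) {R : Type*} [Semiring R] (Ct : Submodule R (Option (ZMod n) → R)) :
    Prop :=
  ∀ a b c d : ZMod n, a * d - b * c = 1 → ∀ v ∈ Ct, (fun p => v (mobius n a b c d p)) ∈ Ct

theorem Submodule.eq_top_of_single_one_mem {R ι : Type*} [Semiring R] [Finite ι] [DecidableEq ι]
    (S : Submodule R (ι → R)) (h : ∀ i, Pi.single i 1 ∈ S) : S = ⊤ := by
  rw [eq_top_iff, ← (Pi.basisFun R ι).span_eq, Submodule.span_le]
  rintro _ ⟨i, rfl⟩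
  simpa using h i

theorem Option.eq_of_comp_some_eq {α M : Type*} [Fintype α] [AddCommMonoid M]
    {u v : Option α → M} (hu : u none = ∑ i, u (some i)) (hv : v none = ∑ i, v (some i))
    (h : u ∘ some = v ∘ some) : u = v := by
  have h' : ∀ i, u (some i) = v (some i) := congrFun h
  funext p
  cases p with
  | none => simp only [hu, hv, h']
  | some i => exact h' i

section mobius

variable {n : ℕ} [Fact n.Prime]

theorem mobius_translate (b : ZMod n) (p : Option (ZMod n)) :
    mobius n 1 0 b 1 p = Option.map (· + b) p := by
  cases p <;> simp [mobius]

theorem mobius_eq_none_iff (x : ZMod n) (p : Option (ZMod n)) :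
    mobius n 0 1 (-1) (-x) p = none ↔ p = some x := by
  cases p with
  | none => simp [mobius]
  | some y =>
    simp only [mobius, one_mul, Option.some.injEq]
    split_ifs with h <;> simp only [true_iff, false_iff] <;> grind

theorem sum_translates_eq (hodd : Odd n) (v : Option (ZMod n) → ZMod 2) :
    ∑ b : ZMod n, (fun p => v (Option.map (· + b) p)) =
      Pi.single none (v none - ∑ i, v (some i)) + fun _ => ∑ i, v (some i) := by
  funext p
  cases p with
  | none => simp [hodd.natCast_zmod_two]
  | some y =>
    simpa [Finset.sum_apply] using Equiv.sum_comp (Equiv.addLeft y) fun x => v (some x)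

end mobius

section parity

variable {n : ℕ} [Fact n.Prime] {Ct : Submodule (ZMod 2) (Option (ZMod n) → ZMod 2)}

theorem IsPSL2Invariant.exists_single_none_add_const_mem (hinv : IsPSL2Invariant n Ct)
    (hodd : Odd n) {v : Option (ZMod n) → ZMod 2} (hv : v ∈ Ct)
    (hpar : v none ≠ ∑ i, v (some i)) :
    ∃ c : ZMod 2, Pi.single none 1 + (fun _ => c) ∈ Ct := by
  have hone : v none - ∑ i, v (some i) = 1 := by
    have : ∀ a : ZMod 2, a ≠ 0 → a = 1 := by decide
    exact this _ (sub_ne_zero.2 hpar)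
  refine ⟨∑ i, v (some i), ?_⟩
  rw [← hone, ← sum_translates_eq hodd]
  refine Submodule.sum_mem _ fun b _ => ?_
  simpa only [mobius_translate] using hinv 1 0 b 1 (by ring) v hv

theorem IsPSL2Invariant.single_some_sub_single_none_mem (hinv : IsPSL2Invariant n Ct)
    {c : ZMod 2} (hw : Pi.single none 1 + (fun _ => c) ∈ Ct) (x : ZMod n) :
    Pi.single (some x) 1 - Pi.single none 1 ∈ Ct := by
  have hmoved : Pi.single (some x) 1 + (fun _ => c) ∈ Ct := by
    convert hinv 0 1 (-1) (-x) (by ring) _ hw using 1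
    funext p
    simp only [Pi.add_apply, Pi.single_apply, mobius_eq_none_iff]
  simpa using Ct.sub_mem hmoved hw

theorem single_none_mem_of_single_some_sub_mem (hodd : Odd n) {c : ZMod 2}
    (hw : Pi.single none 1 + (fun _ => c) ∈ Ct)
    (hd : ∀ x : ZMod n, Pi.single (some x) 1 - Pi.single none 1 ∈ Ct) :
    Pi.single none 1 ∈ Ct := by
  -- `∑ₓ (e_x - e_∞) = 𝟙 - (n + 1) e_∞ = 𝟙` since `n + 1` is even
  have hsum : ∑ x : ZMod n, (Pi.single (some x) 1 - Pi.single none 1 : Option (ZMod n) → ZMod 2)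
      = fun _ => 1 := by
    funext p
    cases p with
    | none => simp [Finset.sum_apply, hodd.natCast_zmod_two]
    | some y => simp [Finset.sum_apply, Pi.single_apply]
  convert Ct.sub_mem hw (Ct.smul_mem c (Ct.sum_mem fun x _ => hd x)) using 1
  rw [hsum]
  funext p
  simp

theorem IsPSL2Invariant.apply_none_eq_sum (hinv : IsPSL2Invariant n Ct) (hodd : Odd n)
    (hne : Ct ≠ ⊤) {v : Option (ZMod n) → ZMod 2} (hv : v ∈ Ct) :
    v none = ∑ i, v (some i) := by
  by_contra hpar
  obtain ⟨c, hw⟩ := hinv.exists_single_none_add_const_mem hodd hv hpar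
  have hd := hinv.single_some_sub_single_none_mem hw
  have hnone := single_none_mem_of_single_some_sub_mem hodd hw hd
  refine hne (Ct.eq_top_of_single_one_mem fun p => ?_)
  cases p with
  | none => exact hnone
  | some x => simpa using Ct.add_mem (hd x) hnone

end parity

/-- Let `n` be an odd prime and `C̃` a binary linear code of length `n+1`, coordinates
indexed by `GF(n) ∪ {∞}`, with `C̃ ≠ GF(2)^{n+1}`, invariant under `PSL₂(n)`. Then the
punctured code `C` of `C̃` at `∞` is cyclic, `dim C = dim C̃`, and `C̃` is the extended
code of `C` (the extended coordinate being the sum of the other coordinates). -/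
theorem punctured_code_cyclic_and_extended (n : ℕ) [Fact (Nat.Prime n)] (hodd : Odd n)
    (Ct : Submodule (ZMod 2) (Option (ZMod n) → ZMod 2)) (hne : Ct ≠ ⊤)
    (hinv : ∀ a b c d : ZMod n, a * d - b * c = 1 →
      ∀ v ∈ Ct, (fun p => v (mobius n a b c d p)) ∈ Ct)
    (C : Submodule (ZMod 2) (ZMod n → ZMod 2))
    (hC : C = Ct.map (LinearMap.funLeft (ZMod 2) (ZMod 2) (some : ZMod n → Option (ZMod n)))) :
    (∀ c ∈ C, (fun i : ZMod n => c (i + 1)) ∈ C) ∧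
    Module.finrank (ZMod 2) C = Module.finrank (ZMod 2) Ct ∧
    ∀ v : Option (ZMod n) → ZMod 2,
      v ∈ Ct ↔ ((fun i : ZMod n => v (some i)) ∈ C ∧ v none = ∑ i : ZMod n, v (some i)) := by
  have hpar : ∀ v ∈ Ct, v none = ∑ i, v (some i) := fun v hv =>
    IsPSL2Invariant.apply_none_eq_sum hinv hodd hne hv
  subst hC
  refine ⟨?_, ?_, fun v => ⟨fun hv => ⟨⟨v, hv, rfl⟩, hpar v hv⟩, ?_⟩⟩
  · rintro _ ⟨v, hv, rfl⟩
    exact ⟨_, hinv 1 0 1 1 (by ring) v hv, by funext i; simp [mobius_translate]⟩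
  · rw [← LinearMap.range_domRestrict, LinearMap.finrank_range_of_inj]
    rintro ⟨u, hu⟩ ⟨v, hv⟩ huv
    exact Subtype.ext (Option.eq_of_comp_some_eq (hpar u hu) (hpar v hv) huv)
  · rintro ⟨⟨u, hu, huv⟩, hv⟩
    rwa [← Option.eq_of_comp_some_eq (hpar u hu) hv huv]
end

section
/- Let n be an odd prime with n ≡ ±3 (mod 8). Then there is no binary cyclic code of length n of dimension (n+1)/2. Equivalently, no divisor of (x^n−1)/(x−1) over GF(2) has degree (n−1)/2. -/
open Polynomial

lemma deg_factor_dvd (n : ℕ) (hn : n.Prime) (hodd : n ≠ 2)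
    (q : Polynomial (ZMod 2)) (hq : Irreducible q)
    (hdvd : q ∣ cyclotomic n (ZMod 2)) :
    orderOf (2 : ZMod n) ∣ q.natDegree := by
  have : Fact (Irreducible q) := ⟨hq⟩
  let K := AdjoinRoot q
  have hq0 : q ≠ 0 := hq.ne_zero
  have hfd : FiniteDimensional (ZMod 2) K := (AdjoinRoot.powerBasis hq0).finite
  have : Finite K := Module.finite_of_finite (ZMod 2)
  have : Fintype K := Fintype.ofFinite K
  have hcard : Fintype.card K = 2 ^ q.natDegree := by
    rw [Module.card_eq_pow_finrank (K := ZMod 2) (V := K), ZMod.card,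
      (AdjoinRoot.powerBasis hq0).finrank, AdjoinRoot.powerBasis_dim]
  -- char 2
  have hchar : CharP K 2 := charP_of_injective_algebraMap
    (algebraMap (ZMod 2) K).injective 2
  have h2n : ¬ (2 ∣ n) := by
    intro hd
    exact hodd ((Nat.prime_dvd_prime_iff_eq Nat.prime_two hn).mp hd).symm
  have : NeZero ((n : K)) := ⟨fun h0 => h2n ((CharP.cast_eq_zero_iff K 2 n).mp h0)⟩
  -- the root is a primitive n-th root of unity
  let x : K := AdjoinRoot.root q
  have hroot : IsRoot (cyclotomic n K) x := by
    rw [← map_cyclotomic n (algebraMap (ZMod 2) K)]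
    obtain ⟨c, hc⟩ := hdvd
    rw [IsRoot, eval_map, ← aeval_def, hc, map_mul, AdjoinRoot.aeval_eq,
      AdjoinRoot.mk_self, zero_mul]
  have hprim : IsPrimitiveRoot x n := (isRoot_cyclotomic_iff).mp hroot
  have hnpos : 0 < n := hn.pos
  have hord : orderOf x = n := (hprim.eq_orderOf).symm
  have hx0 : x ≠ 0 := by
    intro h0
    have := hprim.pow_eq_one
    rw [h0, zero_pow hnpos.ne'] at this
    exact zero_ne_one this
  have hdvd2 : n ∣ 2 ^ q.natDegree - 1 := by
    rw [← hord, ← hcard]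
    exact orderOf_dvd_of_pow_eq_one (FiniteField.pow_card_sub_one_eq_one x hx0)
  -- transfer to ZMod n
  have h1le : 1 ≤ 2 ^ q.natDegree := Nat.one_le_two_pow
  have : ((2 : ZMod n)) ^ q.natDegree = 1 := by
    have := (ZMod.natCast_eq_zero_iff _ n).mpr hdvd2
    have h2 : ((2 ^ q.natDegree - 1 : ℕ) : ZMod n) = 0 := this
    rw [Nat.cast_sub h1le] at h2
    push_cast at h2
    linear_combination h2
  exact orderOf_dvd_of_pow_eq_one this

lemma deg_dvd_of_dvd (n : ℕ) (hn : n.Prime) (hodd : n ≠ 2)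
    (g : Polynomial (ZMod 2)) (hdvd : g ∣ cyclotomic n (ZMod 2)) :
    orderOf (2 : ZMod n) ∣ g.natDegree := by
  have hcyc0 : cyclotomic n (ZMod 2) ≠ 0 := cyclotomic_ne_zero n _
  suffices H : ∀ m g, g ∣ cyclotomic n (ZMod 2) → (g:Polynomial (ZMod 2)).natDegree = m →
      orderOf (2 : ZMod n) ∣ m from H g.natDegree g hdvd rfl
  intro m
  induction m using Nat.strong_induction_on with
  | _ m ih =>
    intro g hdvd hd
    subst hd
    have hg0 : g ≠ 0 := fun h => hcyc0 (by simpa [h] using hdvd)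
    by_cases hu : IsUnit g
    · simp [Polynomial.natDegree_eq_zero_of_isUnit hu]
    · obtain ⟨p, hp, hpg⟩ := WfDvdMonoid.exists_irreducible_factor hu hg0
      obtain ⟨g', rfl⟩ := hpg
      have hg'0 : g' ≠ 0 := fun h => hg0 (by simp [h])
      have hp0 : p ≠ 0 := hp.ne_zero
      have hdeg : (p * g').natDegree = p.natDegree + g'.natDegree :=
        natDegree_mul hp0 hg'0
      have hppos : 0 < p.natDegree := hp.natDegree_pos
      have hlt : g'.natDegree < (p * g').natDegree := by omega
      have h1 := deg_factor_dvd n hn hodd p hp (dvd_trans (Dvd.intro g' rfl) hdvd)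
      have h2 := ih g'.natDegree hlt g' (dvd_trans (Dvd.intro_left p rfl) hdvd) rfl
      rw [hdeg]
      exact Nat.dvd_add h1 h2

/-- Let `n` be an odd prime with `n ≡ ±3 (mod 8)`. Then there is no binary cyclic
code of length `n` of dimension `(n+1)/2`; equivalently, no divisor of
`(X^n − 1)/(X − 1) = 1 + X + ... + X^{n-1}` over `GF(2)` has degree `(n−1)/2`. -/
theorem no_dimension_half_code (n : ℕ) (hn : n.Prime) (h : n % 8 = 3 ∨ n % 8 = 5) :
    ¬ ∃ g : Polynomial (ZMod 2),
      g ∣ (∑ i ∈ Finset.range n, (X : Polynomial (ZMod 2)) ^ i) ∧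
      g.natDegree = (n - 1) / 2 := by
  have hn2 : n ≠ 2 := by omega
  have : Fact n.Prime := ⟨hn⟩
  rintro ⟨g, hdvd, hdeg⟩
  rw [← Polynomial.cyclotomic_prime (ZMod 2) n] at hdvd
  have hdd := deg_dvd_of_dvd n hn hn2 g hdvd
  rw [hdeg] at hdd
  -- 2^((n-1)/2) = 1 in ZMod n
  have hn3 : 3 ≤ n := by omega
  have h2ne : (2 : ZMod n) ≠ 0 := by
    intro h0
    have h2 : ((2 : ℕ) : ZMod n) = 0 := by exact_mod_cast h0
    rw [ZMod.natCast_eq_zero_iff] at h2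
    have := Nat.eq_zero_of_dvd_of_lt h2 (by omega)
    omega
  have hpow : (2 : ZMod n) ^ (n / 2) = 1 := by
    have : (n - 1) / 2 = n / 2 := by omega
    rw [← this]
    exact orderOf_dvd_iff_pow_eq_one.mp hdd
  have hsq : IsSquare (2 : ZMod n) := (ZMod.euler_criterion n h2ne).mpr hpow
  rw [ZMod.exists_sq_eq_two_iff hn2] at hsq
  omega
end

section
/- Let n be an odd prime, let c ∈ GF(2)^n ⊕ GF(2) be indexed by GF(n) ∪ {∞}, and let d be the vector obtained by applying the permutation T: y ↦ −1/y of GF(n) ∪ {∞} (with T(0)=∞, T(∞)=0) to the coordinates of c. With β a primitive n-th root of unity in GF(2^m), the Fourier coefficients satisfy, for 1 ≤ j ≤ n−1: D_j = Σ_{i=1}^{n−1} β^{ij} Σ_{k=1}^{n−1} β^{(i^{−1})k} C_k, where C, D are the Fourier transforms of the GF(n)-indexed parts of c and d respectively, and c_∞ = Σ_{i=0}^{n−1} c_i. -/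
/-- Let `n` be an odd prime, `c` a vector indexed by `GF(n) ∪ {∞}` with
`c_∞ = Σ_{i∈GF(n)} c_i`, and let `d` be obtained from `c` by applying the
permutation `T : y ↦ −1/y` (with `T(0) = ∞`, `T(∞) = 0`) to the coordinates,
i.e. `d_x = c_{T(x)}`. With `β` a primitive `n`-th root of unity in `GF(2^m)`,
`m = ord_n(2)`, the Fourier transforms of the `GF(n)`-indexed parts satisfy, for
`1 ≤ j ≤ n−1`: `D_j = Σ_{i=1}^{n−1} β^{ij} Σ_{k=1}^{n−1} β^{(i⁻¹)k} C_k`. -/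
theorem fourier_of_inversion (n m : ℕ) [Fact (Nat.Prime n)] (hodd : Odd n)
    (hm : m = orderOf (2 : ZMod n))
    (β : GaloisField 2 m) (hβ : orderOf β = n)
    (c d : ZMod n → ZMod 2)
    (hd : ∀ i : ZMod n, d i = if i = 0 then ∑ k : ZMod n, c k else c (-i⁻¹))
    (Cf Df : ZMod n → GaloisField 2 m)
    (hCf : ∀ j : ZMod n,
      Cf j = ∑ i : ZMod n, algebraMap (ZMod 2) (GaloisField 2 m) (c i) * β ^ (i * j).val)
    (hDf : ∀ j : ZMod n,
      Df j = ∑ i : ZMod n, algebraMap (ZMod 2) (GaloisField 2 m) (d i) * β ^ (i * j).val) :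
    ∀ j : ZMod n, j ≠ 0 →
      Df j = ∑ i ∈ Finset.univ.filter (fun i : ZMod n => i ≠ 0),
        β ^ (i * j).val *
          ∑ k ∈ Finset.univ.filter (fun k : ZMod n => k ≠ 0),
            β ^ (i⁻¹ * k).val * Cf k := by
  have hn : Nat.Prime n := Fact.out
  have hn1 : 1 < n := hn.one_lt
  haveI : NeZero n := ⟨hn.ne_zero⟩
  set A := algebraMap (ZMod 2) (GaloisField 2 m) with hA
  have hβn : β ^ n = 1 := hβ ▸ pow_orderOf_eq_one β
  have hβ1 : β ≠ 1 := by
    intro h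
    rw [h, orderOf_one] at hβ
    omega
  -- powers of β only depend on exponents mod n
  have hkey : ∀ x : ℕ, β ^ (x % n) = β ^ x := by
    intro x
    conv_rhs => rw [← Nat.div_add_mod x n]
    rw [pow_add, pow_mul, hβn, one_pow, one_mul]
  have hpow : ∀ a b : ZMod n, β ^ a.val * β ^ b.val = β ^ (a + b).val := by
    intro a b
    rw [← pow_add, ZMod.val_add, hkey]
  -- n = 1 in the Galois field
  have h2 : (2 : GaloisField 2 m) = 0 := by
    have := CharP.cast_eq_zero (GaloisField 2 m) 2
    exact_mod_cast this
  have hone : ((n : ℕ) : GaloisField 2 m) = 1 := by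
    obtain ⟨k, hk⟩ := hodd
    rw [hk]
    push_cast
    rw [h2]
    ring
  -- geometric sum over all of ZMod n vanishes
  have hsum0 : ∑ i : ZMod n, β ^ i.val = 0 := by
    have h1 : ∑ i : ZMod n, β ^ i.val = ∑ k ∈ Finset.range n, β ^ k := by
      apply Finset.sum_bij' (fun (i : ZMod n) _ => i.val) (fun k _ => (k : ZMod n))
      · intro a _; exact Finset.mem_range.mpr (ZMod.val_lt a)
      · intro a _; exact Finset.mem_univ _
      · intro a _; exact ZMod.natCast_rightInverse a
      · intro k hk; exact ZMod.val_natCast_of_lt (Finset.mem_range.mp hk)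
      · intro a _; rfl
    rw [h1, geom_sum_eq hβ1, hβn, sub_self, zero_div]
  have hsumIf : ∀ a : ZMod n, ∑ i : ZMod n, β ^ (a * i).val
      = if a = 0 then 1 else 0 := by
    intro a
    by_cases ha : a = 0
    · rw [ha, if_pos rfl]
      simp only [zero_mul, ZMod.val_zero, pow_zero]
      rw [Finset.sum_const, Finset.card_univ, ZMod.card, nsmul_eq_mul, hone, mul_one]
    · rw [if_neg ha]
      have := Fintype.sum_equiv (Equiv.mulLeft₀ a ha)
        (fun i : ZMod n => β ^ (a * i).val) (fun i : ZMod n => β ^ i.val) (fun i => rfl)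
      rw [this, hsum0]
  -- Cf 0 is the total sum of c
  have hd0 : d 0 = ∑ k : ZMod n, c k := by simp [hd 0]
  have hCf0 : Cf 0 = A (d 0) := by
    rw [hCf 0, hd0, map_sum]
    apply Finset.sum_congr rfl
    intro i _
    simp
  -- main computation
  intro j hj
  -- the inner sum
  have claim1 : ∀ i : ZMod n, i ≠ 0 →
      (∑ k ∈ Finset.univ.filter (fun k : ZMod n => k ≠ 0), β ^ (i⁻¹ * k).val * Cf k)
        = A (d i) + A (d 0) := by
    intro i hi
    rw [Finset.filter_ne', Finset.sum_erase_eq_sub (Finset.mem_univ 0), CharTwo.sub_eq_add]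
    have hfull : ∑ k : ZMod n, β ^ (i⁻¹ * k).val * Cf k = A (c (-i⁻¹)) := by
      have hterm : ∀ k : ZMod n, β ^ (i⁻¹ * k).val * Cf k
          = ∑ l : ZMod n, A (c l) * β ^ ((i⁻¹ + l) * k).val := by
        intro k
        rw [hCf, Finset.mul_sum]
        apply Finset.sum_congr rfl
        intro l _
        rw [mul_left_comm, hpow]
        congr 2
        ring
      calc ∑ k : ZMod n, β ^ (i⁻¹ * k).val * Cf k
          = ∑ k : ZMod n, ∑ l : ZMod n, A (c l) * β ^ ((i⁻¹ + l) * k).val :=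
            Finset.sum_congr rfl fun k _ => hterm k
        _ = ∑ l : ZMod n, ∑ k : ZMod n, A (c l) * β ^ ((i⁻¹ + l) * k).val :=
            Finset.sum_comm
        _ = ∑ l : ZMod n, A (c l) * (if i⁻¹ + l = 0 then 1 else 0) := by
            apply Finset.sum_congr rfl
            intro l _
            rw [← Finset.mul_sum, hsumIf]
        _ = ∑ l : ZMod n, (if l = -i⁻¹ then A (c l) else 0) := by
            apply Finset.sum_congr rfl
            intro l _
            by_cases h : l = -i⁻¹
            · subst h
              simp
            · rw [if_neg h, if_neg (fun hh => h (by linear_combination hh)), mul_zero]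
        _ = A (c (-i⁻¹)) := by
            rw [Finset.sum_ite_eq' Finset.univ (-i⁻¹) (fun l => A (c l)), if_pos (Finset.mem_univ _)]
    rw [hfull]
    have hc : c (-i⁻¹) = d i := by rw [hd i, if_neg hi]
    rw [hc]
    congr 1
    simp [hCf0]
  -- now the outer sum
  rw [Finset.sum_congr rfl (fun i hi => by
    rw [claim1 i (by simpa using (Finset.mem_filter.mp hi).2)])]
  have expand : ∑ i ∈ Finset.univ.filter (fun i : ZMod n => i ≠ 0),
      β ^ (i * j).val * (A (d i) + A (d 0))
      = (∑ i ∈ Finset.univ.filter (fun i : ZMod n => i ≠ 0), β ^ (i * j).val * A (d i))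
        + (∑ i ∈ Finset.univ.filter (fun i : ZMod n => i ≠ 0), β ^ (i * j).val) * A (d 0) := by
    rw [Finset.sum_mul, ← Finset.sum_add_distrib]
    apply Finset.sum_congr rfl
    intro i _
    ring
  rw [expand]
  have hfirst : ∑ i ∈ Finset.univ.filter (fun i : ZMod n => i ≠ 0),
      β ^ (i * j).val * A (d i) = Df j + A (d 0) := by
    rw [Finset.filter_ne', Finset.sum_erase_eq_sub (Finset.mem_univ 0), CharTwo.sub_eq_add]
    congr 1
    · rw [hDf]
      apply Finset.sum_congr rfl
      intro i _
      ring
    · simp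
  have hsecond : ∑ i ∈ Finset.univ.filter (fun i : ZMod n => i ≠ 0),
      β ^ (i * j).val = 1 := by
    rw [Finset.filter_ne', Finset.sum_erase_eq_sub (Finset.mem_univ 0), CharTwo.sub_eq_add]
    have h0 : ∑ i : ZMod n, β ^ (i * j).val = 0 := by
      have hj' := hsumIf j
      rw [if_neg hj] at hj'
      rw [← hj']
      apply Finset.sum_congr rfl
      intro i _
      rw [mul_comm]
    rw [h0]
    simp
  rw [hfirst, hsecond, one_mul, add_assoc, CharTwo.add_self_eq_zero, add_zero]
end
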